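/- Let n ≥ 1 and let μ_n be the product of n copies of the uniform distribution on [0, 2π). Then the expected ℓ∞ condition number of a Haar-butterfly matrix equals N^ξ for ξ = log₂(1 + 2/π): ∫ ∏_{j=1}^n (1 + |sin(2θ_j)|) dμ_n(θ) = (1 + 2/π)ⁿ = N^{log₂(1 + 2/π)}, where N = 2ⁿ. (Here ∏_{j=1}^n (1 + |sin(2θ_j)|) = κ_∞(B(θ)) is the ℓ∞ condition number of the Haar-butterfly matrix B(θ).) -/

import Mathlib

/-!
Under `μ_n` the angles are independent, so the integral of the product is the `n`-th power of
the one-dimensional integral `∫ (1 + |sin 2θ|) d unif = 1 + (2π)⁻¹ ∫₀^{2π} |sin 2θ| dθ`.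
Since `|sin|` is `π`-periodic with integral `2` over a period, the last integral is `4`.
-/

open MeasureTheory Real

noncomputable def unif : Measure ℝ :=
  (ENNReal.ofReal (2 * π))⁻¹ • volume.restrict (Set.Ico 0 (2 * π))

noncomputable def μpi (n : ℕ) : Measure (Fin n → ℝ) :=
  Measure.pi fun _ => unif

theorem integral_abs_sin_zero_nat_mul_pi (k : ℕ) : ∫ x in (0 : ℝ)..k * π, |sin x| = 2 * k := by
  have hper : Function.Periodic (fun x => |sin x|) π := fun x => by simp [sin_add_pi]
  have hint (a b : ℝ) : IntervalIntegrable (fun x => |sin x|) volume a b :=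
    continuous_sin.abs.intervalIntegrable a b
  have hperiod : ∫ x in (0 : ℝ)..π, |sin x| = 2 := by
    rw [intervalIntegral.integral_congr (g := sin), integral_sin]
    · norm_num
    · intro x hx
      rw [Set.uIcc_of_le pi_nonneg] at hx
      exact abs_of_nonneg (sin_nonneg_of_nonneg_of_le_pi hx.1 hx.2)
  have hk : (k : ℝ) * π = 0 + (k : ℤ) • π := by simp
  rw [hk, hper.intervalIntegral_add_zsmul_eq k 0 hint, zero_add, hperiod]
  simp [mul_comm]

theorem integral_abs_sin_two_mul_zero_two_pi : ∫ x in (0 : ℝ)..2 * π, |sin (2 * x)| = 4 := by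
  rw [intervalIntegral.integral_comp_mul_left (fun x => |sin x|) two_ne_zero, mul_zero,
    ← mul_assoc, show (2 : ℝ) * 2 = (4 : ℕ) by norm_num, integral_abs_sin_zero_nat_mul_pi]
  norm_num

theorem integral_unif (f : ℝ → ℝ) : ∫ x, f x ∂unif = (2 * π)⁻¹ * ∫ x in (0 : ℝ)..2 * π, f x := by
  rw [unif, integral_smul_measure, integral_Ico_eq_integral_Ioo, ← integral_Ioc_eq_integral_Ioo,
    ← intervalIntegral.integral_of_le two_pi_pos.le, ENNReal.toReal_inv,
    ENNReal.toReal_ofReal two_pi_pos.le, smul_eq_mul]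

instance isProbabilityMeasure_unif : IsProbabilityMeasure unif := by
  constructor
  rw [unif, Measure.smul_apply, Measure.restrict_apply_univ, volume_Ico, sub_zero, smul_eq_mul,
    ENNReal.inv_mul_cancel (by simp [pi_pos]) ENNReal.ofReal_ne_top]

theorem integral_one_add_abs_sin_two_mul_unif : ∫ x, (1 + |sin (2 * x)|) ∂unif = 1 + 2 / π := by
  have hc : Continuous fun x : ℝ => |sin (2 * x)| := by fun_prop
  rw [integral_unif, intervalIntegral.integral_add intervalIntegrable_const
    (hc.intervalIntegrable _ _), integral_abs_sin_two_mul_zero_two_pi, intervalIntegral.integral_const]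
  field_simp [pi_pos.ne']
  ring

theorem pow_eq_pow_rpow_logb {b c : ℝ} (hb : 0 < b) (hb₁ : b ≠ 1) (hc : 0 < c) (n : ℕ) :
    c ^ n = (b ^ n) ^ logb b c := by
  rw [← rpow_natCast b, ← rpow_mul hb.le, mul_comm, rpow_mul hb.le, rpow_logb hb hb₁ hc,
    rpow_natCast]

theorem expected_cond_linf_general (n : ℕ) :
    (∫ θ : Fin n → ℝ, ∏ j, (1 + |Real.sin (2 * θ j)|) ∂(μpi n)) = (1 + 2 / π) ^ n ∧
    ((1 + 2 / π : ℝ)) ^ n = ((2 : ℝ) ^ n) ^ Real.logb 2 (1 + 2 / π) := by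
  constructor
  · rw [μpi, integral_fintype_prod_eq_pow (fun x => 1 + |sin (2 * x)|),
      integral_one_add_abs_sin_two_mul_unif, Fintype.card_fin]
  · exact pow_eq_pow_rpow_logb two_pos (by norm_num) (by positivity) n

/-- The expected ℓ∞ condition number of an `N×N` Haar-butterfly matrix (`N = 2ⁿ`) is
`N^ξ` for `ξ = log₂(1 + 2/π)`: `∫ ∏_j (1 + |sin(2θ_j)|) dμ_n(θ) = (1 + 2/π)ⁿ`. -/
theorem expected_cond_linf (n : ℕ) (hn : 1 ≤ n) :
    (∫ θ : Fin n → ℝ, ∏ j, (1 + |Real.sin (2 * θ j)|) ∂(μpi n)) = (1 + 2 / π) ^ n ∧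
    ((1 + 2 / π : ℝ)) ^ n = ((2 : ℝ) ^ n) ^ Real.logb 2 (1 + 2 / π) :=
  expected_cond_linf_general n
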